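/- The Laplace mechanism satisfies ε-differential privacy: if M(D) = Q(D) + Lap(Δf/ε) where Δf is the sensitivity of query Q, then for any neighboring datasets D, D' and any measurable set S of outputs, Pr[M(D) ∈ S] ≤ exp(ε) · Pr[M(D') ∈ S]. -/
import Mathlib


open MeasureTheory

/-- The Laplace mechanism `M(D) = Q(D) + Lap(Δf/ε)` satisfies ε-differential privacy:
for neighboring datasets and any measurable output set `S`,
`Pr[M(D) ∈ S] ≤ exp ε · Pr[M(D') ∈ S]`.  The Laplace noise with scale `λ = Δf/ε`
has density `(1/(2λ)) exp(-|x|/λ)` with respect to Lebesgue measure. -/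
theorem laplace_mechanism_dp
    (Dset : Type*) (neighbor : Dset → Dset → Prop)
    (Q : Dset → ℝ) (Δf ε : ℝ) (hΔ : 0 < Δf) (hε : 0 < ε)
    (hsens : ∀ d d', neighbor d d' → |Q d - Q d'| ≤ Δf)
    (M : Dset → Measure ℝ)
    (hM : ∀ d, M d = Measure.map (fun x => Q d + x)
      (volume.withDensity (fun x =>
        ENNReal.ofReal (1 / (2 * (Δf / ε)) * Real.exp (-|x| / (Δf / ε))))))
    (d d' : Dset) (hnb : neighbor d d')
    (S : Set ℝ) (hS : MeasurableSet S) :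
    M d S ≤ ENNReal.ofReal (Real.exp ε) * M d' S := by
  set l : ℝ := Δf / ε with hl
  have hlpos : 0 < l := div_pos hΔ hε
  set f : ℝ → ENNReal := fun x =>
    ENNReal.ofReal (1 / (2 * l) * Real.exp (-|x| / l)) with hf
  have hf_meas : Measurable f := by
    apply Measurable.ennreal_ofReal
    fun_prop
  set c : ℝ := Q d - Q d' with hc
  have hcΔ : |c| ≤ Δf := hsens d d' hnb
  -- pointwise density bound
  have key : ∀ x : ℝ, f x ≤ ENNReal.ofReal (Real.exp ε) * f (x + c) := by
    intro x
    rw [hf]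
    rw [← ENNReal.ofReal_mul (Real.exp_nonneg ε)]
    apply ENNReal.ofReal_le_ofReal
    rw [show Real.exp ε * (1 / (2 * l) * Real.exp (-|x + c| / l))
        = 1 / (2 * l) * (Real.exp ε * Real.exp (-|x + c| / l)) by ring,
      ← Real.exp_add]
    apply mul_le_mul_of_nonneg_left _ (by positivity)
    apply Real.exp_le_exp.mpr
    have hεl : ε * l = Δf := by
      rw [hl]; field_simp
    have h1 : |x + c| ≤ |x| + Δf := le_trans (abs_add_le x c) (by linarith)
    have h2 : ε + -|x + c| / l = (ε * l - |x + c|) / l := by field_simp; ring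
    rw [h2]
    apply div_le_div_of_nonneg_right (by linarith) (le_of_lt hlpos)
  -- preimage sets
  have hg : ∀ a : ℝ, Measurable (fun x : ℝ => a + x) := fun a => measurable_const_add a
  have hTd : MeasurableSet ((fun x : ℝ => Q d + x) ⁻¹' S) := hS.preimage (hg _)
  have hTd' : MeasurableSet ((fun x : ℝ => Q d' + x) ⁻¹' S) := hS.preimage (hg _)
  rw [hM d, hM d', Measure.map_apply (hg _) hS, Measure.map_apply (hg _) hS,
    withDensity_apply _ hTd, withDensity_apply _ hTd']
  have hset : (fun x : ℝ => Q d + x) ⁻¹' S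
      = (fun x : ℝ => x + c) ⁻¹' ((fun x : ℝ => Q d' + x) ⁻¹' S) := by
    ext x
    simp only [Set.mem_preimage, hc]
    rw [show Q d' + (x + c) = Q d + x from by rw [hc]; ring]
  calc ∫⁻ x in (fun x : ℝ => Q d + x) ⁻¹' S, f x
      ≤ ∫⁻ x in (fun x : ℝ => Q d + x) ⁻¹' S,
          ENNReal.ofReal (Real.exp ε) * f (x + c) :=
        lintegral_mono (fun x => key x)
    _ = ENNReal.ofReal (Real.exp ε) *
          ∫⁻ x in (fun x : ℝ => Q d + x) ⁻¹' S, f (x + c) :=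
        lintegral_const_mul _ (hf_meas.comp (measurable_add_const c))
    _ = ENNReal.ofReal (Real.exp ε) *
          ∫⁻ y in (fun x : ℝ => Q d' + x) ⁻¹' S, f y := by
        congr 1
        rw [hset]
        rw [← setLIntegral_map hTd' hf_meas (measurable_add_const c),
          map_add_right_eq_self volume c]
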